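/- For all integers j ≥ 2 and k ≥ 7j³ such that k + j is even, the weak monarchy function is defined by its Chow parameters: for every x ∈ {−1,1}^k, WMON_{k,j}(x) = sign(Σ_{i=1}^k f̂({i})·x_i), where f = WMON_{k,j}. -/

import Mathlib

/-- sign(z) = 1 if z > 0 and 0 otherwise. -/
noncomputable def Rsign (z : ℝ) : ℝ := if 0 < z then 1 else 0

/-- Encoding of {-1,1}: `true ↦ 1`, `false ↦ -1`. -/
def pm (b : Bool) : ℝ := if b then 1 else -1

/-- The weak monarchy function WMON_{k,j}(x) = sign(j·x_1 + x_2 + ⋯ + x_k). -/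
noncomputable def WMON (k j : ℕ) (x : Fin k → Bool) : ℝ :=
  Rsign (∑ i : Fin k, (if (i : ℕ) = 0 then (j : ℝ) else 1) * pm (x i))

/-- The Chow parameter (degree-1 Fourier coefficient) f̂({i}) = 2^{-k}·Σ_x f(x)·x_i. -/
noncomputable def chow (k : ℕ) (f : (Fin k → Bool) → ℝ) (i : Fin k) : ℝ :=
  (∑ x, f x * pm (x i)) / 2 ^ k

/-!
Write `k = 2l + j + 2` and `n = 2l + j`, and let `t = j·x₀ + x₁ + ⋯ + x_{k-1}` be the sum defining
`WMON`. Expanding a Chow parameter along its coordinate counts the inputs on which that coordinate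
is pivotal: the weighted coordinate is pivotal when the other `n + 1` coordinates sum into
`(-j, j]`, so `2^k f̂({0}) = A := ∑_{i<j} C(n+1, l+1+i)`; an unweighted one is pivotal when the
remaining weighted sum vanishes, so `2^k f̂({i}) = B := 2 C(n, l)` for `i ≠ 0`. Hence
`∑ f̂({i}) xᵢ = 2^{-k} (B t + (A - jB) x₀)`, and since `t` is an odd integer by the parity
assumption, this has the sign of `t` as soon as `|A - jB| < B`.

Since `C(n, c) ≥ C(n, l)` for `l ≤ c ≤ l + j`, Pascal's rule gives `A ≥ jB`. The bound `A < (j+1)B`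
reduces to `(j-1) C(n, ⌊n/2⌋) < j C(n, l)`: the ratio of these binomials is at most
`((l+j)/(l+1))^{j/2}`, which is below `j/(j-1)` once `l ≥ j³`.
-/

open Finset

theorem add_pow_mul_sub_le {R : Type*} [CommRing R] [LinearOrder R] [IsStrictOrderedRing R]
    {L D : R} (hL : 0 ≤ L) (hD : 0 ≤ D) (t : ℕ) :
    (L + D) ^ t * (L - t * D) ≤ L ^ (t + 1) := by
  induction t with
  | zero => simp
  | succ t ih =>
    have hpow : 0 ≤ (t + 1 : R) * D ^ 2 * (L + D) ^ t := by positivity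
    calc (L + D) ^ (t + 1) * (L - ↑(t + 1) * D)
        = L * ((L + D) ^ t * (L - t * D)) - (t + 1) * D ^ 2 * (L + D) ^ t := by
          push_cast; ring
      _ ≤ L * L ^ (t + 1) := by nlinarith [mul_le_mul_of_nonneg_left ih hL]
      _ = L ^ (t + 1 + 1) := by ring

theorem mul_add_pow_lt {D L t : ℕ} (h : (D + 1) * t * D < L) :
    D * (L + D) ^ t < (D + 1) * L ^ t := by
  have key := add_pow_mul_sub_le (R := ℤ) (L := L) (D := D) (by positivity) (by positivity) t
  have h' : ((D + 1) * t * D : ℤ) < L := by exact_mod_cast h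
  have htD : (0 : ℤ) ≤ t * D * D := by positivity
  have hQ : (0 : ℤ) < L - t * D := by linarith
  have hLt : (0 : ℤ) < (L : ℤ) ^ t := pow_pos (by nlinarith) t
  suffices (D * (L + D) ^ t : ℤ) < (D + 1) * L ^ t by exact_mod_cast this
  refine lt_of_mul_lt_mul_right ?_ hQ.le
  calc (D * (L + D) ^ t : ℤ) * (L - t * D) ≤ D * L ^ (t + 1) := by
        rw [mul_assoc]; exact mul_le_mul_of_nonneg_left key (by positivity)
    _ = D * L ^ t * L := by ring
    _ < (D + 1) * L ^ t * (L - t * D) := by nlinarith [mul_pos hLt (sub_pos.2 h')]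

theorem choose_add_mul_pow_le (n l t : ℕ) :
    n.choose (l + t) * (l + 1) ^ t ≤ n.choose l * (n - l) ^ t := by
  have hmul := Nat.choose_mul (n := n) (k := l + t) (s := l) (by omega)
  rw [Nat.add_sub_cancel_left, Nat.choose_symm_add] at hmul
  have hdesc : n.choose (l + t) * (l + t).descFactorial t
      = n.choose l * (n - l).descFactorial t := by
    simp only [Nat.descFactorial_eq_factorial_mul_choose]
    calc n.choose (l + t) * (t.factorial * (l + t).choose t)
        = t.factorial * (n.choose (l + t) * (l + t).choose t) := by ring
      _ = n.choose l * (t.factorial * (n - l).choose t) := by rw [hmul]; ring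
  calc n.choose (l + t) * (l + 1) ^ t
      ≤ n.choose (l + t) * (l + t).descFactorial t := by
        gcongr
        simpa [show l + t + 1 - t = l + 1 by omega] using Nat.pow_sub_le_descFactorial (l + t) t
    _ = n.choose l * (n - l).descFactorial t := hdesc
    _ ≤ n.choose l * (n - l) ^ t := by gcongr; exact Nat.descFactorial_le_pow _ _

theorem choose_le_choose_of_le_of_le_half {n a b : ℕ} (hab : a ≤ b) (hb : b ≤ n / 2) :
    n.choose a ≤ n.choose b := by
  induction b, hab using Nat.le_induction with
  | base => rfl
  | succ b _ ih => exact (ih (by omega)).trans (Nat.choose_le_succ_of_lt_half_left (by omega))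

theorem choose_le_choose_of_le_of_le_sub {n l c : ℕ} (hlc : l ≤ c) (hc : c ≤ n - l) :
    n.choose l ≤ n.choose c := by
  rcases le_or_gt c (n / 2) with h | h
  · exact choose_le_choose_of_le_of_le_half hlc h
  · rw [← Nat.choose_symm (by omega : c ≤ n)]
    exact choose_le_choose_of_le_of_le_half (by omega) (by omega)

theorem sub_one_mul_choose_middle_lt {l j : ℕ} (hj : 1 ≤ j) (hl : j ^ 3 ≤ l) :
    (j - 1) * (2 * l + j).choose ((2 * l + j) / 2) < j * (2 * l + j).choose l := by
  set n := 2 * l + j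
  obtain ⟨t, ht⟩ : ∃ t, n / 2 = l + t := ⟨j / 2, by omega⟩
  have hpow : (j - 1) * (l + 1 + (j - 1)) ^ t < (j - 1 + 1) * (l + 1) ^ t := by
    apply mul_add_pow_lt
    have : (j - 1 + 1) * t * (j - 1) ≤ j * j * j := by
      rw [Nat.sub_add_cancel hj]; gcongr <;> omega
    nlinarith
  rw [show l + 1 + (j - 1) = n - l by omega, Nat.sub_add_cancel hj] at hpow
  have hpos : 0 < n.choose l := Nat.choose_pos (by omega)
  rw [ht]
  refine Nat.lt_of_mul_lt_mul_right (a := (l + 1) ^ t) ?_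
  calc (j - 1) * n.choose (l + t) * (l + 1) ^ t
      ≤ (j - 1) * (n.choose l * (n - l) ^ t) := by
        rw [mul_assoc]; exact Nat.mul_le_mul_left _ (choose_add_mul_pow_le n l t)
    _ = n.choose l * ((j - 1) * (n - l) ^ t) := by ring
    _ < n.choose l * (j * (l + 1) ^ t) := by gcongr
    _ = j * n.choose l * (l + 1) ^ t := by ring

theorem mul_lt_sum_choose_succ_add (l j : ℕ) :
    j * (2 * (2 * l + j).choose l)
      < ∑ i ∈ range j, (2 * l + j + 1).choose (l + 1 + i) + 2 * (2 * l + j).choose l := by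
  have hpos : 0 < (2 * l + j).choose l := Nat.choose_pos (by omega)
  have hterm : ∀ i ∈ range j,
      2 * (2 * l + j).choose l ≤ (2 * l + j + 1).choose (l + 1 + i) := by
    intro i hi
    rw [mem_range] at hi
    rw [show l + 1 + i = l + i + 1 by ring, Nat.choose_succ_succ', two_mul]
    gcongr <;> exact choose_le_choose_of_le_of_le_sub (by omega) (by omega)
  have := card_nsmul_le_sum _ _ _ hterm
  rw [card_range, smul_eq_mul] at this
  omega

theorem sum_choose_succ_lt_mul_add {l j : ℕ} (hj : 1 ≤ j) (hl : j ^ 3 ≤ l) :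
    ∑ i ∈ range j, (2 * l + j + 1).choose (l + 1 + i)
      < j * (2 * (2 * l + j).choose l) + 2 * (2 * l + j).choose l := by
  set n := 2 * l + j
  have hpascal : ∑ i ∈ range j, (n + 1).choose (l + 1 + i)
      = ∑ i ∈ range j, n.choose (l + i) + ∑ i ∈ range j, n.choose (l + (i + 1)) := by
    rw [← sum_add_distrib]
    refine sum_congr rfl fun i _ => ?_
    rw [show l + 1 + i = l + i + 1 by ring, Nat.choose_succ_succ', add_assoc]
  obtain ⟨d, rfl⟩ : ∃ d, j = d + 1 := ⟨j - 1, by omega⟩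
  have hmid : ∑ i ∈ range d, n.choose (l + (i + 1)) ≤ d * n.choose (n / 2) := by
    simpa using sum_le_card_nsmul (range d) _ _ fun i _ => Nat.choose_le_middle (l + (i + 1)) n
  have hend : n.choose (l + (d + 1)) = n.choose l := by
    rw [← Nat.choose_symm (by omega : l ≤ n)]; congr 1; omega
  have hkey := sub_one_mul_choose_middle_lt (l := l) (j := d + 1) (by omega) hl
  rw [Nat.add_sub_cancel] at hkey
  rw [hpascal, sum_range_succ', sum_range_succ, add_zero, hend]
  nlinarith

theorem Rsign_add_sub_Rsign_sub (x : ℝ) {a : ℝ} (ha : 0 ≤ a) :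
    Rsign (x + a) - Rsign (x - a) = if -a < x ∧ x ≤ a then 1 else 0 := by
  unfold Rsign
  rcases lt_or_ge 0 (x - a) with h | h
  · rw [if_pos h, if_pos (by linarith), if_neg fun h' => by linarith [h'.2], sub_self]
  · rw [if_neg h.not_gt, sub_zero]
    by_cases h' : 0 < x + a
    · rw [if_pos h', if_pos ⟨by linarith, by linarith⟩]
    · rw [if_neg h', if_neg fun h'' => h' (by linarith [h''.1])]

theorem Rsign_mul_add_eq {B t d : ℝ} (hB : 0 < B) (ht : 1 ≤ |t|) (hd : |d| < B) :
    Rsign (B * t + d) = Rsign t := by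
  rw [abs_lt] at hd
  unfold Rsign
  rcases le_abs'.1 ht with ht | ht
  · rw [if_neg (by nlinarith), if_neg (by linarith)]
  · rw [if_pos (by nlinarith), if_pos (by linarith)]

@[simp] theorem pm_true : pm true = 1 := rfl

@[simp] theorem pm_false : pm false = -1 := rfl

theorem abs_pm (b : Bool) : |pm b| = 1 := by
  cases b <;> simp

theorem sum_pm_eq {n : ℕ} (y : Fin n → Bool) : ∑ i, pm (y i) = 2 * #{i | y i} - n := by
  have hpm : ∀ b, pm b = 2 * (if b then 1 else 0) - 1 := by
    intro b; cases b <;> norm_num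
  simp only [hpm, sum_sub_distrib, ← mul_sum, sum_boole]
  simp

theorem sum_comp_sum_pm {M : Type*} [AddCommMonoid M] {n : ℕ} (g : ℝ → M) :
    ∑ y : Fin n → Bool, g (∑ i, pm (y i)) = ∑ c ∈ range (n + 1), n.choose c • g (2 * c - n) := by
  simp only [sum_pm_eq]
  have hcard := sum_powerset_apply_card (fun c => g (2 * c - n)) (x := (univ : Finset (Fin n)))
  rw [card_univ, Fintype.card_fin, powerset_univ] at hcard
  rw [← hcard]
  exact sum_nbij' (fun y => ({i | y i} : Finset (Fin n))) (fun s i => decide (i ∈ s))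
    (by simp) (by simp) (fun y _ => by ext; simp) (fun s _ => by ext; simp) (fun y _ => rfl)

theorem sum_choose_nsmul_ite {n : ℕ} {s : Finset ℕ} (hs : s ⊆ range (n + 1)) (p : ℕ → Prop)
    [DecidablePred p] (hp : ∀ c ∈ range (n + 1), p c ↔ c ∈ s) :
    ∑ c ∈ range (n + 1), n.choose c • (if p c then (1 : ℝ) else 0)
      = ∑ c ∈ s, (n.choose c : ℝ) := by
  rw [← inter_eq_right.2 hs, ← sum_ite_mem]
  refine sum_congr rfl fun c hc => ?_
  simp only [nsmul_eq_mul, mul_ite, mul_one, mul_zero]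
  exact if_congr (hp c hc) rfl rfl

theorem Fintype.sum_insertNth {α M : Type*} [Fintype α] [AddCommMonoid M] {n : ℕ}
    (i : Fin (n + 1)) (F : (Fin (n + 1) → α) → M) :
    ∑ x, F x = ∑ a, ∑ y : Fin n → α, F (i.insertNth a y) := by
  rw [← (Fin.insertNthEquiv (fun _ => α) i).sum_comp, Fintype.sum_prod_type]
  rfl

theorem chow_eq_sum_sub {n : ℕ} (f : (Fin (n + 1) → Bool) → ℝ) (i : Fin (n + 1)) :
    chow (n + 1) f i
      = (∑ y, (f (i.insertNth true y) - f (i.insertNth false y))) / 2 ^ (n + 1) := by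
  rw [chow, Fintype.sum_insertNth i, Fintype.sum_bool, ← sum_add_distrib]
  congr 1
  refine sum_congr rfl fun y _ => ?_
  simp only [Fin.insertNth_apply_same, pm_true, pm_false]
  ring

noncomputable def wmonSum (k j : ℕ) (x : Fin k → Bool) : ℝ :=
  ∑ i : Fin k, (if (i : ℕ) = 0 then (j : ℝ) else 1) * pm (x i)

theorem WMON_eq_Rsign_wmonSum (k j : ℕ) (x : Fin k → Bool) :
    WMON k j x = Rsign (wmonSum k j x) :=
  rfl

theorem wmonSum_succ {n : ℕ} (j : ℕ) (x : Fin (n + 1) → Bool) :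
    wmonSum (n + 1) j x = j * pm (x 0) + ∑ i : Fin n, pm (x i.succ) := by
  simp [wmonSum, Fin.sum_univ_succ]

theorem wmonSum_insertNth_zero {n : ℕ} (j : ℕ) (b : Bool) (y : Fin n → Bool) :
    wmonSum (n + 1) j (Fin.insertNth 0 b y) = j * pm b + ∑ i, pm (y i) := by
  simp [wmonSum_succ]

theorem wmonSum_insertNth_of_ne_zero {n : ℕ} (j : ℕ) {i : Fin (n + 1)} (hi : i ≠ 0) (b : Bool)
    (y : Fin n → Bool) :
    wmonSum (n + 1) j (i.insertNth b y) = pm b + wmonSum n j y := by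
  rw [wmonSum, Fin.sum_univ_succAbove _ i, Fin.insertNth_apply_same,
    if_neg (Fin.val_ne_zero_iff.mpr hi), one_mul]
  congr 1
  refine sum_congr rfl fun m _ => ?_
  have : NeZero n := ⟨m.pos.ne'⟩
  simp only [Fin.insertNth_apply_succAbove, Fin.val_eq_zero_iff, Fin.succAbove_eq_zero_iff hi]

theorem one_le_abs_wmonSum {n j : ℕ} (h : Odd (n + j)) (x : Fin (n + 1) → Bool) :
    1 ≤ |wmonSum (n + 1) j x| := by
  rw [wmonSum_succ, sum_pm_eq]
  generalize #{i : Fin n | x i.succ} = c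
  obtain ⟨m, hm⟩ := h
  obtain ⟨z, hz, hz0⟩ : ∃ z : ℤ, (j : ℝ) * pm (x 0) + (2 * c - n) = z ∧ z ≠ 0 := by
    cases x 0
    · exact ⟨2 * c - n - j, by push_cast [pm_false]; ring, by omega⟩
    · exact ⟨2 * c - n + j, by push_cast [pm_true]; ring, by omega⟩
  rw [hz]
  exact_mod_cast Int.one_le_abs hz0

theorem chow_WMON_zero (l j : ℕ) :
    chow (2 * l + j + 2) (WMON (2 * l + j + 2) j) 0
      = (∑ i ∈ range j, (2 * l + j + 1).choose (l + 1 + i) : ℕ) / 2 ^ (2 * l + j + 2) := by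
  rw [chow_eq_sum_sub]
  congr 1
  simp only [WMON_eq_Rsign_wmonSum, wmonSum_insertNth_zero, pm_true, pm_false]
  have hpivot : ∀ s : ℝ, Rsign (j * 1 + s) - Rsign (j * -1 + s)
      = if -(j : ℝ) < s ∧ s ≤ j then 1 else 0 := fun s => by
    rw [← Rsign_add_sub_Rsign_sub s (Nat.cast_nonneg j)]
    congr 2 <;> ring
  simp only [hpivot]
  rw [sum_comp_sum_pm (fun s : ℝ => if -(j : ℝ) < s ∧ s ≤ j then (1 : ℝ) else 0),
    sum_choose_nsmul_ite (s := Ico (l + 1) (l + 1 + j))]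
  · rw [sum_Ico_eq_sum_range, Nat.add_sub_cancel_left]
    push_cast
    rfl
  · intro c
    simp only [mem_Ico, mem_range]
    omega
  · intro c _
    rw [mem_Ico, show 2 * (c : ℝ) - ((2 * l + j + 1 : ℕ) : ℝ)
      = ((2 * (c : ℤ) - (2 * l + j + 1) : ℤ) : ℝ) by push_cast; ring]
    simp only [← Int.cast_natCast (R := ℝ) j, ← Int.cast_neg, Int.cast_lt, Int.cast_le]
    omega

theorem chow_WMON_of_ne_zero (l j : ℕ) {i : Fin (2 * l + j + 2)} (hi : i ≠ 0) :
    chow (2 * l + j + 2) (WMON (2 * l + j + 2) j) i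
      = (2 * (2 * l + j).choose l : ℕ) / 2 ^ (2 * l + j + 2) := by
  rw [chow_eq_sum_sub]
  congr 1
  simp only [WMON_eq_Rsign_wmonSum, wmonSum_insertNth_of_ne_zero j hi, pm_true, pm_false]
  rw [Fintype.sum_insertNth 0]
  simp only [wmonSum_insertNth_zero, Fintype.sum_bool, pm_true, pm_false]
  have hpivot : ∀ u s : ℝ, Rsign (1 + (u + s)) - Rsign (-1 + (u + s))
      = if -1 < u + s ∧ u + s ≤ 1 then 1 else 0 := fun u s => by
    rw [← Rsign_add_sub_Rsign_sub (u + s) zero_le_one]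
    congr 2 <;> ring
  simp only [hpivot]
  rw [sum_comp_sum_pm (fun s : ℝ => if -1 < (j : ℝ) * 1 + s ∧ (j : ℝ) * 1 + s ≤ 1 then (1 : ℝ) else 0),
    sum_comp_sum_pm
      (fun s : ℝ => if -1 < (j : ℝ) * -1 + s ∧ (j : ℝ) * -1 + s ≤ 1 then (1 : ℝ) else 0),
    sum_choose_nsmul_ite (s := {l}), sum_choose_nsmul_ite (s := {l + j})]
  · rw [sum_singleton, sum_singleton,
      Nat.choose_symm_of_eq_add (by ring : 2 * l + j = l + j + l)]
    push_cast
    ring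
  all_goals intro c
  all_goals simp only [mem_singleton, mem_range]
  · omega
  · intro _
    rw [show (j : ℝ) * -1 + (2 * c - ((2 * l + j : ℕ) : ℝ))
      = ((2 * (c : ℤ) - 2 * (l + j)) : ℤ) by push_cast; ring, ← Int.cast_one, ← Int.cast_neg,
      Int.cast_lt, Int.cast_le]
    omega
  · omega
  · intro _
    rw [show (j : ℝ) * 1 + (2 * c - ((2 * l + j : ℕ) : ℝ))
      = ((2 * (c : ℤ) - 2 * l) : ℤ) by push_cast; ring, ← Int.cast_one, ← Int.cast_neg,
      Int.cast_lt, Int.cast_le]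
    omega

theorem sum_mul_pm_eq_of_ne_zero {n : ℕ} (j : ℕ) {c : Fin (n + 1) → ℝ} {b : ℝ}
    (hc : ∀ i ≠ 0, c i = b) (x : Fin (n + 1) → Bool) :
    ∑ i, c i * pm (x i) = b * wmonSum (n + 1) j x + (c 0 - j * b) * pm (x 0) := by
  simp only [Fin.sum_univ_succ, wmonSum_succ, hc _ (Fin.succ_ne_zero _), ← mul_sum]
  ring

theorem abs_div_sub_mul_div_lt {A B K j : ℝ} (hK : 0 < K) (hlow : j * B < A + B)
    (hup : A < j * B + B) : |A / K - j * (B / K)| < B / K := by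
  rw [show A / K - j * (B / K) = (A - j * B) / K by ring, abs_div, abs_of_pos hK]
  exact div_lt_div_of_pos_right (abs_sub_lt_iff.2 ⟨by linarith, by linarith⟩) hK

theorem stmt_9 (j k : ℕ) (hj : 2 ≤ j) (hk : 7 * j ^ 3 ≤ k) (he : Even (k + j)) :
    ∀ x : Fin k → Bool,
      WMON k j x = Rsign (∑ i : Fin k, chow k (WMON k j) i * pm (x i)) := by
  have hj3 : j ≤ j ^ 3 := Nat.le_self_pow (by norm_num) j
  obtain ⟨l, rfl⟩ : ∃ l, k = 2 * l + j + 2 := by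
    obtain ⟨m, hm⟩ := he
    exact ⟨(k - j - 2) / 2, by omega⟩
  have hl : j ^ 3 ≤ l := by omega
  intro x
  rw [sum_mul_pm_eq_of_ne_zero j (fun i hi => chow_WMON_of_ne_zero l j hi), chow_WMON_zero,
    WMON_eq_Rsign_wmonSum]
  have hB : (0 : ℝ) < (2 * (2 * l + j).choose l : ℕ) :=
    Nat.cast_pos.2 (Nat.mul_pos two_pos (Nat.choose_pos (by omega)))
  refine (Rsign_mul_add_eq (by positivity) (one_le_abs_wmonSum ⟨l + j, by ring⟩ x) ?_).symm
  rw [abs_mul, abs_pm, mul_one]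
  exact abs_div_sub_mul_div_lt (by positivity) (by exact_mod_cast mul_lt_sum_choose_succ_add l j)
    (by exact_mod_cast sum_choose_succ_lt_mul_add (by omega) hl)
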